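/- If T ∈ B(X) is decomposable and N ∈ B(X) is nilpotent with TN = NT, then T + N is decomposable. -/

import Mathlib

open Filter Metric Polynomial

noncomputable section

variable {X : Type*} [NormedAddCommGroup X] [NormedSpace ℂ X]

/-- The commutator map `C(R,S)(A) = RA - AS`. -/
def commMap (R S : X →L[ℂ] X) : (X →L[ℂ] X) → (X →L[ℂ] X) := fun A => R ∘L A - A ∘L S

/-- Bishop's property (β) at a point `l0`. -/
def BishopBetaAt (T : X →L[ℂ] X) (l0 : ℂ) : Prop :=
  ∃ v > (0 : ℝ), ∀ U : Set ℂ, IsOpen U → U ⊆ ball l0 v →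
    ∀ f : ℕ → ℂ → X, (∀ n, AnalyticOnNhd ℂ (f n) U) →
      (∀ K ⊆ U, IsCompact K →
        TendstoUniformlyOn (fun n z => T (f n z) - z • f n z) 0 atTop K) →
      ∀ K ⊆ U, IsCompact K → TendstoUniformlyOn (fun n z => f n z) 0 atTop K

/-- The Banach-space dual (adjoint) operator `T*` acting on the dual space. -/
def dualOp (T : X →L[ℂ] X) : StrongDual ℂ X →L[ℂ] StrongDual ℂ X :=
  (ContinuousLinearMap.compL ℂ X X ℂ).flip T

/-- `T` is decomposable iff both `T` and its dual have Bishop's property (β) everywhere. -/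
def Decomposable (T : X →L[ℂ] X) : Prop :=
  (∀ l : ℂ, BishopBetaAt T l) ∧ ∀ l : ℂ, BishopBetaAt (dualOp T) l

/-!
If `N ^ m = 0` and `(T + N - z) fₙ → 0` locally uniformly, then by downward induction on `k`
all `N ^ k fₙ` tend to `0`: the case `k = m` is trivial, and since `T` commutes with `N`,
`(T - z) (N ^ k fₙ) = N ^ k ((T + N - z) fₙ) - N ^ (k + 1) fₙ`, so property (β) of `T` applied to
the analytic functions `N ^ k fₙ` passes from `k + 1` to `k`. For `k = 0` this is property (β) of
`T + N`. Taking adjoints preserves commutation and nilpotency, which handles the dual operators.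
-/

lemma TendstoLocallyUniformlyOn.clm_apply {𝕜 α ι E F : Type*} [NormedField 𝕜]
    [TopologicalSpace α] [SeminormedAddCommGroup E] [NormedSpace 𝕜 E] [SeminormedAddCommGroup F]
    [NormedSpace 𝕜 F] {G : ι → α → E} {p : Filter ι} {s : Set α} (A : E →L[𝕜] F)
    (h : TendstoLocallyUniformlyOn G 0 p s) :
    TendstoLocallyUniformlyOn (fun n z => A (G n z)) 0 p s := by
  simpa [Function.comp_def, Pi.zero_def] using A.uniformContinuous.comp_tendstoLocallyUniformlyOn h

lemma bishopBetaAt_iff_tendstoLocallyUniformlyOn (T : X →L[ℂ] X) (l0 : ℂ) :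
    BishopBetaAt T l0 ↔ ∃ v > (0 : ℝ), ∀ U : Set ℂ, IsOpen U → U ⊆ ball l0 v →
      ∀ f : ℕ → ℂ → X, (∀ n, AnalyticOnNhd ℂ (f n) U) →
        TendstoLocallyUniformlyOn (fun n z => T (f n z) - z • f n z) 0 atTop U →
        TendstoLocallyUniformlyOn f 0 atTop U := by
  refine exists_congr fun v => and_congr_right fun _ => forall_congr' fun U => ?_
  refine forall_congr' fun hU => ?_
  simp only [tendstoLocallyUniformlyOn_iff_forall_isCompact hU]

theorem BishopBetaAt.add_of_commute_of_isNilpotent {T N : X →L[ℂ] X} {l : ℂ}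
    (hT : BishopBetaAt T l) (hc : Commute T N) (hN : IsNilpotent N) :
    BishopBetaAt (T + N) l := by
  obtain ⟨v, hv, hβ⟩ := (bishopBetaAt_iff_tendstoLocallyUniformlyOn T l).1 hT
  refine (bishopBetaAt_iff_tendstoLocallyUniformlyOn (T + N) l).2
    ⟨v, hv, fun U hU hUv f hf hTNf => ?_⟩
  have step : ∀ k, TendstoLocallyUniformlyOn (fun n z => (N ^ (k + 1)) (f n z)) 0 atTop U →
      TendstoLocallyUniformlyOn (fun n z => (N ^ k) (f n z)) 0 atTop U := fun k hk => by
    refine hβ U hU hUv _ (fun n => (N ^ k).comp_analyticOnNhd (hf n)) ?_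
    have hTNk : ∀ x, T ((N ^ k) x) = (N ^ k) (T x) := fun x => by
      rw [← mul_apply_eq_comp, (hc.pow_right k).eq, mul_apply_eq_comp]
    convert (hTNf.clm_apply (N ^ k)).fun_sub hk using 1
    · ext n z
      simp only [hTNk, pow_succ, mul_apply_eq_comp, add_apply, map_sub, map_add, map_smul]
      abel
    · ext; simp
  obtain ⟨m, hm⟩ := hN
  have hfm : TendstoLocallyUniformlyOn (fun n z => (N ^ m) (f n z)) 0 atTop U := by
    simpa [hm] using hTNf.clm_apply (N ^ m)
  simpa using Nat.decreasingInduction (motive := fun k _ =>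
    TendstoLocallyUniformlyOn (fun n z => (N ^ k) (f n z)) 0 atTop U)
    (fun k _ => step k) hfm (Nat.zero_le m)

lemma dualOp_apply (T : X →L[ℂ] X) (φ : StrongDual ℂ X) : dualOp T φ = φ ∘L T := rfl

lemma dualOp_add (A B : X →L[ℂ] X) : dualOp (A + B) = dualOp A + dualOp B := by
  ext; simp [dualOp_apply]

lemma dualOp_mul (A B : X →L[ℂ] X) : dualOp (A * B) = dualOp B * dualOp A := by
  ext; simp [dualOp_apply]

lemma dualOp_one : dualOp (1 : X →L[ℂ] X) = 1 := by
  ext; simp [dualOp_apply]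

lemma dualOp_zero : dualOp (0 : X →L[ℂ] X) = 0 := by
  ext; simp [dualOp_apply]

set_option synthInstance.maxHeartbeats 400000 in
lemma dualOp_pow (A : X →L[ℂ] X) (k : ℕ) : dualOp (A ^ k) = dualOp A ^ k := by
  induction k with
  | zero => exact dualOp_one
  | succ k ih => rw [pow_succ', dualOp_mul, ih, pow_succ]

lemma Commute.dualOp {A B : X →L[ℂ] X} (h : Commute A B) : Commute (dualOp A) (dualOp B) := by
  rw [Commute, SemiconjBy, ← dualOp_mul, ← dualOp_mul, h.eq]

lemma IsNilpotent.dualOp {A : X →L[ℂ] X} (h : IsNilpotent A) : IsNilpotent (dualOp A) := by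
  obtain ⟨m, hm⟩ := h
  exact ⟨m, by rw [← dualOp_pow, hm, dualOp_zero]⟩

theorem stmt16_general (T N : X →L[ℂ] X)
    (hT : Decomposable T) (hN : ∃ m : ℕ, 1 ≤ m ∧ N ^ m = 0) (hcomm : T * N = N * T) :
    Decomposable (T + N) := by
  obtain ⟨m, -, hm⟩ := hN
  have hNil : IsNilpotent N := ⟨m, hm⟩
  refine ⟨fun l => (hT.1 l).add_of_commute_of_isNilpotent hcomm hNil, fun l => ?_⟩
  rw [dualOp_add]
  exact (hT.2 l).add_of_commute_of_isNilpotent (Commute.dualOp hcomm) hNil.dualOp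

theorem stmt16 [CompleteSpace X] (T N : X →L[ℂ] X)
    (hT : Decomposable T) (hN : ∃ m : ℕ, 1 ≤ m ∧ N ^ m = 0) (hcomm : T * N = N * T) :
    Decomposable (T + N) :=
  stmt16_general T N hT hN hcomm
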